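/- arXiv:1909.04766 — 4 statements merged into one kernel-verified Lean document; each statement's English description precedes it below -/
import Mathlib

section
/- Let T ≥ 1 and N ≥ 1, let α_1,…,α_T be nonnegative real numbers, and let δ_1,…,δ_T be random variables on a probability space taking values in {0,1} with E[δ_t] = p_t. For each n ∈ {1,…,N}, let A_n and B_n be disjoint subsets with A_n ∪ B_n = {1,…,T}, let γ_n > 0, and define D_n = Σ_{t∈A_n} α_t δ_t − Σ_{t∈B_n} α_t δ_t. Then (1/N) Σ_{n=1}^N P(|D_n| > γ_n/2) ≤ ((2/N) Σ_{n=1}^N 1/γ_n) · (Σ_{t=1}^T α_t p_t). -/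
open MeasureTheory Finset

/-- Averaged Markov bound (Theorem 1): the empirical mismatch probability over
`N` data points, the `n`-th with margin `γ n > 0`, is at most
`((2/N) ∑ n, 1/γ n) * (∑ t, α t * p t)`. -/
theorem markov_bound_averaged {Ω : Type*} [MeasurableSpace Ω]
    (P : Measure Ω) [IsProbabilityMeasure P]
    {T N : ℕ} (hT : 1 ≤ T) (hN : 1 ≤ N)
    (α p : Fin T → ℝ) (hα : ∀ t, 0 ≤ α t)
    (δ : Fin T → Ω → ℝ) (hmeas : ∀ t, Measurable (δ t))
    (hval : ∀ t ω, δ t ω = 0 ∨ δ t ω = 1)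
    (hexp : ∀ t, ∫ ω, δ t ω ∂P = p t)
    (A B : Fin N → Finset (Fin T))
    (hdisj : ∀ n, Disjoint (A n) (B n)) (hunion : ∀ n, A n ∪ B n = univ)
    (γ : Fin N → ℝ) (hγ : ∀ n, 0 < γ n) :
    (1 / (N : ℝ)) * ∑ n,
        (P {ω | γ n / 2 < |∑ t ∈ A n, α t * δ t ω - ∑ t ∈ B n, α t * δ t ω|}).toReal
      ≤ ((2 / (N : ℝ)) * ∑ n, 1 / γ n) * ∑ t, α t * p t := by
  have hδint : ∀ t, Integrable (δ t) P := fun t =>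
    (integrable_const (1:ℝ)).mono' (hmeas t).aestronglyMeasurable
      (ae_of_all _ fun ω => by rcases hval t ω with h|h <;> simp [h])
  set S : Ω → ℝ := fun ω => ∑ t, α t * δ t ω with hS
  have hSint : Integrable S P := integrable_finset_sum _ fun t _ => ((hδint t).const_mul _)
  have hSnn : ∀ ω, 0 ≤ S ω := fun ω => Finset.sum_nonneg fun t _ =>
    mul_nonneg (hα t) (by rcases hval t ω with h|h <;> simp [h])
  have hES : ∫ ω, S ω ∂P = ∑ t, α t * p t := by
    rw [integral_finset_sum _ (fun t _ => (hδint t).const_mul _)]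
    exact Finset.sum_congr rfl fun t _ => by rw [integral_const_mul, hexp t]
  have key : ∀ n, (P {ω | γ n / 2 < |∑ t ∈ A n, α t * δ t ω - ∑ t ∈ B n, α t * δ t ω|}).toReal
      ≤ (2 / γ n) * ∑ t, α t * p t := by
    intro n
    have hsub : {ω | γ n / 2 < |∑ t ∈ A n, α t * δ t ω - ∑ t ∈ B n, α t * δ t ω|}
        ⊆ {ω | γ n / 2 ≤ S ω} := by
      intro ω hω
      have hAnn : 0 ≤ ∑ t ∈ A n, α t * δ t ω := Finset.sum_nonneg fun t _ =>
        mul_nonneg (hα t) (by rcases hval t ω with h|h <;> simp [h])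
      have hBnn : 0 ≤ ∑ t ∈ B n, α t * δ t ω := Finset.sum_nonneg fun t _ =>
        mul_nonneg (hα t) (by rcases hval t ω with h|h <;> simp [h])
      have hsum : (∑ t ∈ A n, α t * δ t ω) + ∑ t ∈ B n, α t * δ t ω = S ω := by
        rw [← Finset.sum_union (hdisj n), hunion n]
      have : |∑ t ∈ A n, α t * δ t ω - ∑ t ∈ B n, α t * δ t ω| ≤ S ω := by
        rw [← hsum]
        calc |∑ t ∈ A n, α t * δ t ω - ∑ t ∈ B n, α t * δ t ω|
            ≤ |∑ t ∈ A n, α t * δ t ω| + |∑ t ∈ B n, α t * δ t ω| := abs_sub _ _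
          _ = _ := by rw [abs_of_nonneg hAnn, abs_of_nonneg hBnn]
      exact le_trans (le_of_lt hω) this
    have hmono : (P {ω | γ n / 2 < |∑ t ∈ A n, α t * δ t ω - ∑ t ∈ B n, α t * δ t ω|}).toReal
        ≤ (P {ω | γ n / 2 ≤ S ω}).toReal :=
      ENNReal.toReal_mono (measure_ne_top _ _) (measure_mono hsub)
    have hmarkov := mul_meas_ge_le_integral_of_nonneg (ae_of_all _ hSnn) hSint (γ n / 2)
    rw [hES] at hmarkov
    have hγn := hγ n
    have : (P {ω | γ n / 2 ≤ S ω}).toReal ≤ (2 / γ n) * ∑ t, α t * p t := by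
      calc (P {ω | γ n / 2 ≤ S ω}).toReal ≤ (∑ t, α t * p t) / (γ n / 2) :=
            (le_div_iff₀' (by positivity)).mpr hmarkov
        _ = (2 / γ n) * ∑ t, α t * p t := by field_simp
    exact le_trans hmono this
  calc (1 / (N : ℝ)) * ∑ n,
        (P {ω | γ n / 2 < |∑ t ∈ A n, α t * δ t ω - ∑ t ∈ B n, α t * δ t ω|}).toReal
      ≤ (1 / (N : ℝ)) * ∑ n, (2 / γ n) * ∑ t, α t * p t := by
        apply mul_le_mul_of_nonneg_left (Finset.sum_le_sum fun n _ => key n) (by positivity)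
    _ = ((2 / (N : ℝ)) * ∑ n, 1 / γ n) * ∑ t, α t * p t := by
        rw [← Finset.sum_mul]
        have : ∑ n, 2 / γ n = 2 * ∑ n, 1 / γ n := by
          rw [Finset.mul_sum]; exact Finset.sum_congr rfl fun n _ => by ring
        rw [this]; ring
end

section
/- Let T ≥ 1 and N ≥ 1, let α_1,…,α_T be nonnegative real numbers, let p_1,…,p_T ∈ [0,1], and let δ_1,…,δ_T be independent random variables taking values in {0,1} with P(δ_t = 1) = p_t. For each n ∈ {1,…,N}, let A_n and B_n be disjoint subsets with A_n ∪ B_n = {1,…,T}, let γ_n ≥ 0, and define D_n = Σ_{t∈A_n} α_t δ_t − Σ_{t∈B_n} α_t δ_t. Then for every s > 0, (1/N) Σ_{n=1}^N P(D_n > γ_n/2) ≤ ((1/N) Σ_{n=1}^N exp(−s·γ_n/2)) · exp(Σ_{t=1}^T (e^{sα_t} − 1) p_t). -/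
open MeasureTheory Finset ProbabilityTheory

/-! Each margin event is a Chernoff tail event for the signed sum `∑ ± α t δ t` of independent
Bernoulli variables, so its probability is at most `exp (-s γ / 2)` times the product of the
moment generating functions `1 + (exp (± s α t) - 1) p t`. Both signs are dominated by
`exp ((exp (s α t) - 1) p t)` because `1 + x ≤ exp x` and `α t ≥ 0`; averaging over the data
points gives the bound. -/

lemma Finset.sum_sub_sum_eq_sum_ite {ι M : Type*} [Fintype ι] [DecidableEq ι] [AddCommGroup M]
    {A B : Finset ι} (hdisj : Disjoint A B) (hunion : A ∪ B = univ) (f : ι → M) :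
    ∑ t ∈ A, f t - ∑ t ∈ B, f t = ∑ t, if t ∈ A then f t else -f t := by
  rw [← hunion, sum_union hdisj, sum_congr rfl fun t ht => if_pos ht,
    sum_congr rfl fun t ht => if_neg (disjoint_right.mp hdisj ht), sum_neg_distrib, sub_eq_add_neg]

lemma Real.exp_mul_eq_one_add_of_zero_or_one {x : ℝ} (hx : x = 0 ∨ x = 1) (a : ℝ) :
    Real.exp (a * x) = 1 + (Real.exp a - 1) * x := by
  rcases hx with rfl | rfl <;> simp

lemma Real.one_add_mul_le_exp_of_le {c a p : ℝ} (hca : c ≤ a) (hp : 0 ≤ p) :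
    1 + (Real.exp c - 1) * p ≤ Real.exp ((Real.exp a - 1) * p) := by
  have hmono : (Real.exp c - 1) * p ≤ (Real.exp a - 1) * p := by gcongr
  linarith [Real.add_one_le_exp ((Real.exp a - 1) * p)]

lemma eq_indicator_of_zero_or_one {Ω : Type*} {X : Ω → ℝ} (hX : ∀ ω, X ω = 0 ∨ X ω = 1) :
    X = {ω | X ω = 1}.indicator 1 := by
  funext ω
  rcases hX ω with h | h <;> simp [Set.indicator, h]

section ZeroOne

variable {Ω : Type*} [MeasurableSpace Ω] {P : Measure Ω} {X : Ω → ℝ}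

lemma integral_eq_measureReal_of_zero_or_one (hmeas : Measurable X)
    (hX : ∀ ω, X ω = 0 ∨ X ω = 1) :
    ∫ ω, X ω ∂P = P.real {ω | X ω = 1} := by
  conv_lhs => rw [eq_indicator_of_zero_or_one hX]
  have h := integral_indicator_const (μ := P) (1 : ℝ) (hmeas (measurableSet_singleton 1))
  rwa [smul_eq_mul, mul_one] at h

lemma integrable_of_zero_or_one [IsFiniteMeasure P] (hmeas : Measurable X)
    (hX : ∀ ω, X ω = 0 ∨ X ω = 1) : Integrable X P := by
  rw [eq_indicator_of_zero_or_one hX]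
  exact (integrable_const 1).indicator (hmeas (measurableSet_singleton 1))

lemma mgf_const_mul_of_zero_or_one [IsProbabilityMeasure P] (hmeas : Measurable X)
    (hX : ∀ ω, X ω = 0 ∨ X ω = 1) (c s : ℝ) :
    mgf (fun ω => c * X ω) P s = 1 + (Real.exp (s * c) - 1) * P.real {ω | X ω = 1} := by
  simp_rw [mgf, ← mul_assoc, fun ω => Real.exp_mul_eq_one_add_of_zero_or_one (hX ω) (s * c)]
  rw [integral_add (integrable_const 1) ((integrable_of_zero_or_one hmeas hX).const_mul _),
    integral_const, integral_const_mul, integral_eq_measureReal_of_zero_or_one hmeas hX]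
  simp

end ZeroOne

lemma measureReal_lt_sum_mul_le_exp {Ω ι : Type*} [MeasurableSpace Ω] [Fintype ι]
    {P : Measure Ω} {δ : ι → Ω → ℝ} (hind : iIndepFun δ P) (hmeas : ∀ t, Measurable (δ t))
    (hval : ∀ t ω, δ t ω = 0 ∨ δ t ω = 1) {c α : ι → ℝ} (hcα : ∀ t, c t ≤ α t)
    {s : ℝ} (hs : 0 ≤ s) (x : ℝ) :
    P.real {ω | x < ∑ t, c t * δ t ω}
      ≤ Real.exp (-(s * x))
          * Real.exp (∑ t, (Real.exp (s * α t) - 1) * P.real {ω | δ t ω = 1}) := by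
  have := hind.isProbabilityMeasure
  set Y : ι → Ω → ℝ := fun t ω => c t * δ t ω
  have hYmeas : ∀ t, Measurable (Y t) := fun t => (hmeas t).const_mul _
  have hYind : iIndepFun Y P := hind.comp (fun t x => c t * x) fun t => measurable_const_mul _
  have hYint : ∀ t ∈ (univ : Finset ι), Integrable (fun ω => Real.exp (s * Y t ω)) P := by
    intro t _
    simp_rw [Y, ← mul_assoc, fun ω => Real.exp_mul_eq_one_add_of_zero_or_one (hval t ω) (s * c t)]
    exact (integrable_const 1).add ((integrable_of_zero_or_one (hmeas t) (hval t)).const_mul _)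
  have hsum : ∀ ω, ∑ t, c t * δ t ω = (∑ t, Y t) ω := fun ω => by
    simp only [Y, Finset.sum_apply]
  calc P.real {ω | x < ∑ t, c t * δ t ω}
      ≤ P.real {ω | x ≤ (∑ t, Y t) ω} :=
        measureReal_mono fun ω hω => (hsum ω ▸ hω : x < (∑ t, Y t) ω).le
    _ ≤ Real.exp (-s * x) * mgf (∑ t, Y t) P s :=
        measure_ge_le_exp_mul_mgf x hs (hYind.integrable_exp_mul_sum hYmeas hYint)
    _ = Real.exp (-(s * x)) * ∏ t, mgf (Y t) P s := by rw [hYind.mgf_sum hYmeas, neg_mul]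
    _ ≤ Real.exp (-(s * x))
          * ∏ t, Real.exp ((Real.exp (s * α t) - 1) * P.real {ω | δ t ω = 1}) := by
        gcongr with t
        · exact fun _ _ => mgf_nonneg
        rw [mgf_const_mul_of_zero_or_one (hmeas t) (hval t)]
        exact Real.one_add_mul_le_exp_of_le (by gcongr; exact hcα t) measureReal_nonneg
    _ = _ := by rw [Real.exp_sum]

theorem chernoff_bound_averaged_general {Ω : Type*} [MeasurableSpace Ω]
    (P : Measure Ω)
    {T N : ℕ}
    (α p : Fin T → ℝ) (hα : ∀ t, 0 ≤ α t)
    (δ : Fin T → Ω → ℝ) (hmeas : ∀ t, Measurable (δ t))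
    (hval : ∀ t ω, δ t ω = 0 ∨ δ t ω = 1)
    (hP : ∀ t, (P {ω | δ t ω = 1}).toReal = p t)
    (hind : iIndepFun δ P)
    (A B : Fin N → Finset (Fin T))
    (hdisj : ∀ n, Disjoint (A n) (B n)) (hunion : ∀ n, A n ∪ B n = univ)
    (γ : Fin N → ℝ)
    (s : ℝ) (hs : 0 < s) :
    (1 / (N : ℝ)) * ∑ n,
        (P {ω | γ n / 2 < ∑ t ∈ A n, α t * δ t ω - ∑ t ∈ B n, α t * δ t ω}).toReal
      ≤ ((1 / (N : ℝ)) * ∑ n, Real.exp (-(s * γ n / 2)))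
          * Real.exp (∑ t, (Real.exp (s * α t) - 1) * p t) := by
  classical
  have hpoint : ∀ n, P.real {ω | γ n / 2 < ∑ t ∈ A n, α t * δ t ω - ∑ t ∈ B n, α t * δ t ω}
      ≤ Real.exp (-(s * γ n / 2)) * Real.exp (∑ t, (Real.exp (s * α t) - 1) * p t) := by
    intro n
    have hsigned : ∀ ω, ∑ t ∈ A n, α t * δ t ω - ∑ t ∈ B n, α t * δ t ω
        = ∑ t, (if t ∈ A n then α t else -α t) * δ t ω := fun ω => by
      simp only [sum_sub_sum_eq_sum_ite (hdisj n) (hunion n), ite_mul, neg_mul]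
    have hsign : ∀ t, (if t ∈ A n then α t else -α t) ≤ α t := fun t => by
      split_ifs <;> linarith [hα t]
    simp_rw [hsigned, ← hP, ← measureReal_def]
    simpa only [mul_div_assoc] using measureReal_lt_sum_mul_le_exp hind hmeas hval hsign hs.le _
  calc (1 / (N : ℝ)) * ∑ n,
          P.real {ω | γ n / 2 < ∑ t ∈ A n, α t * δ t ω - ∑ t ∈ B n, α t * δ t ω}
      ≤ (1 / (N : ℝ)) * ∑ n,
          Real.exp (-(s * γ n / 2)) * Real.exp (∑ t, (Real.exp (s * α t) - 1) * p t) := by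
        gcongr with n
        exact hpoint n
    _ = _ := by rw [← sum_mul, mul_assoc]

/-- Averaged Chernoff bound (Theorem 2): the empirical mismatch probability
over `N` data points, the `n`-th with margin `γ n ≥ 0`, is at most
`((1/N) ∑ n, exp(-sγ n/2)) * exp(∑ t, (e^{sα t} - 1) p t)` for every `s > 0`. -/
theorem chernoff_bound_averaged {Ω : Type*} [MeasurableSpace Ω]
    (P : Measure Ω) [IsProbabilityMeasure P]
    {T N : ℕ} (hT : 1 ≤ T) (hN : 1 ≤ N)
    (α p : Fin T → ℝ) (hα : ∀ t, 0 ≤ α t)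
    (hp0 : ∀ t, 0 ≤ p t) (hp1 : ∀ t, p t ≤ 1)
    (δ : Fin T → Ω → ℝ) (hmeas : ∀ t, Measurable (δ t))
    (hval : ∀ t ω, δ t ω = 0 ∨ δ t ω = 1)
    (hP : ∀ t, (P {ω | δ t ω = 1}).toReal = p t)
    (hind : iIndepFun δ P)
    (A B : Fin N → Finset (Fin T))
    (hdisj : ∀ n, Disjoint (A n) (B n)) (hunion : ∀ n, A n ∪ B n = univ)
    (γ : Fin N → ℝ) (hγ : ∀ n, 0 ≤ γ n)
    (s : ℝ) (hs : 0 < s) :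
    (1 / (N : ℝ)) * ∑ n,
        (P {ω | γ n / 2 < ∑ t ∈ A n, α t * δ t ω - ∑ t ∈ B n, α t * δ t ω}).toReal
      ≤ ((1 / (N : ℝ)) * ∑ n, Real.exp (-(s * γ n / 2)))
          * Real.exp (∑ t, (Real.exp (s * α t) - 1) * p t) :=
  chernoff_bound_averaged_general P α p hα δ hmeas hval hP hind A B hdisj hunion γ s hs
end

section
/- Let T ≥ 1, let β_1,…,β_T be positive reals, σ_1,…,σ_T be positive reals, and C > 0. Suppose r ∈ ℝ^T, ν ∈ ℝ, and λ ∈ ℝ^T satisfy the KKT conditions: Σ_{t=1}^T r_t² ≤ C; ν ≥ 0; ν·(Σ_{t=1}^T r_t² − C) = 0; r_t ≥ 0, λ_t ≥ 0, and λ_t r_t = 0 for all t; and the stationarity conditions −(β_t/(√(2π) σ_t)) exp(−r_t²/(2σ_t²)) + 2ν r_t − λ_t = 0 for all t. Then ν > 0, Σ_{t=1}^T r_t² = C, and for every t: r_t > 0, λ_t = 0, and (r_t/σ_t)² · exp((r_t/σ_t)²) = β_t² / (8π σ_t⁴ ν²). -/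
/-!
Each stationarity condition reads `2 ν r_t = a_t + λ_t` with `a_t > 0` the Gaussian density term,
so `ν r_t > 0`; as `ν ≥ 0` this forces `ν > 0` and `r_t > 0`, after which complementary slackness
gives `λ_t = 0` and a tight budget. Squaring `2 ν r_t = a_t` and multiplying by `exp (r_t/σ_t)²`
cancels the Gaussian factor, which leaves the Lambert-W equation for the SNR.
-/

lemma pos_of_kkt_stationary {a ν r l : ℝ} (ha : 0 < a) (hν : 0 ≤ ν) (hl : 0 ≤ l)
    (hlr : l * r = 0) (hstat : -a + 2 * ν * r - l = 0) : 0 < ν ∧ 0 < r ∧ l = 0 := by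
  have hνr : 0 < ν * r := by linarith
  have hνpos : 0 < ν := lt_of_le_of_ne hν fun h => by simp [← h] at hνr
  have hr : 0 < r := pos_of_mul_pos_right hνr hν
  exact ⟨hνpos, hr, (mul_eq_zero.mp hlr).resolve_right hr.ne'⟩

lemma sq_mul_exp_sq_of_eq_mul_exp {x y c : ℝ} (h : y = c * Real.exp (-x ^ 2 / 2)) :
    y ^ 2 * Real.exp (x ^ 2) = c ^ 2 := by
  have hcancel : Real.exp (-x ^ 2 / 2) ^ 2 * Real.exp (x ^ 2) = 1 := by
    rw [sq, ← Real.exp_add, ← Real.exp_add, ← Real.exp_zero]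
    ring_nf
  rw [h, mul_pow, mul_assoc, hcancel, mul_one]

lemma snr_mul_exp_snr_eq {β σ ν r : ℝ} (hσ : σ ≠ 0) (hν : ν ≠ 0)
    (h : 2 * ν * r = β / (Real.sqrt (2 * Real.pi) * σ) * Real.exp (-r ^ 2 / (2 * σ ^ 2))) :
    (r / σ) ^ 2 * Real.exp ((r / σ) ^ 2)
      = β ^ 2 / (8 * Real.pi * σ ^ 4 * ν ^ 2) := by
  have hgauss : 2 * ν * σ * (r / σ)
      = β / (Real.sqrt (2 * Real.pi) * σ) * Real.exp (-(r / σ) ^ 2 / 2) := by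
    rw [mul_assoc _ σ, mul_div_cancel₀ _ hσ, h]
    congr 2
    field_simp
  have hsq := sq_mul_exp_sq_of_eq_mul_exp hgauss
  rw [div_pow β, mul_pow (Real.sqrt _), Real.sq_sqrt (by positivity)] at hsq
  rw [eq_div_iff (by positivity)] at hsq ⊢
  linear_combination hsq

theorem power_allocation_kkt_general {T : ℕ} (hT : 1 ≤ T)
    (β σ : Fin T → ℝ) (hβ : ∀ t, 0 < β t) (hσ : ∀ t, 0 < σ t)
    (C : ℝ)
    (r : Fin T → ℝ) (ν : ℝ) (lam : Fin T → ℝ)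
    (hν0 : 0 ≤ ν)
    (hcomp : ν * (∑ t, (r t) ^ 2 - C) = 0)
    (hlam0 : ∀ t, 0 ≤ lam t)
    (hcs : ∀ t, lam t * r t = 0)
    (hstat : ∀ t, -(β t / (Real.sqrt (2 * Real.pi) * σ t))
        * Real.exp (-(r t) ^ 2 / (2 * (σ t) ^ 2)) + 2 * ν * r t - lam t = 0) :
    0 < ν ∧ (∑ t, (r t) ^ 2 = C) ∧
    ∀ t, 0 < r t ∧ lam t = 0 ∧
      (r t / σ t) ^ 2 * Real.exp ((r t / σ t) ^ 2)
        = (β t) ^ 2 / (8 * Real.pi * (σ t) ^ 4 * ν ^ 2) := by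
  have hpos : ∀ t, 0 < ν ∧ 0 < r t ∧ lam t = 0 := fun t => by
    have hβt := hβ t
    have hσt := hσ t
    have hstat_t := hstat t
    rw [neg_mul] at hstat_t
    exact pos_of_kkt_stationary (by positivity) hν0 (hlam0 t) (hcs t) hstat_t
  have hν : 0 < ν := (hpos ⟨0, hT⟩).1
  refine ⟨hν, sub_eq_zero.mp ((mul_eq_zero.mp hcomp).resolve_left hν.ne'), fun t => ?_⟩
  obtain ⟨-, hr, hlam⟩ := hpos t
  refine ⟨hr, hlam, snr_mul_exp_snr_eq (hσ t).ne' hν.ne' ?_⟩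
  linarith [hstat t]

/-- Theorem 5 (KKT characterization of optimal power allocation): if
`(r, ν, λ)` satisfies the KKT conditions of the problem
`minimize ∑ t, β t Q(r t / σ t)` subject to `∑ t, r t ² ≤ C`, `r t ≥ 0`,
then `ν > 0`, the power budget is tight, and for every `t`: `r t > 0`,
`λ t = 0`, and the SNR `(r t/σ t)²` satisfies
`(r t/σ t)² exp((r t/σ t)²) = β t²/(8π σ t⁴ ν²)` (i.e. it equals the Lambert
W value `W(β t²/(8π σ t⁴ ν²))`). -/
theorem power_allocation_kkt {T : ℕ} (hT : 1 ≤ T)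
    (β σ : Fin T → ℝ) (hβ : ∀ t, 0 < β t) (hσ : ∀ t, 0 < σ t)
    (C : ℝ) (hC : 0 < C)
    (r : Fin T → ℝ) (ν : ℝ) (lam : Fin T → ℝ)
    (hbudget : ∑ t, (r t) ^ 2 ≤ C)
    (hν0 : 0 ≤ ν)
    (hcomp : ν * (∑ t, (r t) ^ 2 - C) = 0)
    (hr0 : ∀ t, 0 ≤ r t) (hlam0 : ∀ t, 0 ≤ lam t)
    (hcs : ∀ t, lam t * r t = 0)
    (hstat : ∀ t, -(β t / (Real.sqrt (2 * Real.pi) * σ t))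
        * Real.exp (-(r t) ^ 2 / (2 * (σ t) ^ 2)) + 2 * ν * r t - lam t = 0) :
    0 < ν ∧ (∑ t, (r t) ^ 2 = C) ∧
    ∀ t, 0 < r t ∧ lam t = 0 ∧
      (r t / σ t) ^ 2 * Real.exp ((r t / σ t) ^ 2)
        = (β t) ^ 2 / (8 * Real.pi * (σ t) ^ 4 * ν ^ 2) :=
  power_allocation_kkt_general hT β σ hβ hσ C r ν lam hν0 hcomp hlam0 hcs hstat
end

section
/- Let T ≥ 1, let β_1,…,β_T be positive reals, and let C' > 0. Define the geometric mean G = (Π_{t=1}^T β_t)^{1/T} and ν = (G/4)·exp(−C'/(2T)), and assume β_t ≥ 4ν for every t. Set u_t* = 2·log(β_t/(4ν)). Then u_t* ≥ 0 for all t, Σ_{t=1}^T u_t* = C', and u* minimizes the function u ↦ Σ_{t=1}^T (β_t/2)·exp(−u_t/2) over the set {u ∈ ℝ^T : u_t ≥ 0 for all t, Σ_{t=1}^T u_t ≤ C'}, with minimum value Σ_{t=1}^T (β_t/2)·exp(−u_t*/2) = 2Tν = (T/2)·exp(−C'/(2T))·(Π_{t=1}^T β_t)^{1/T}. -/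
/-!
The allocation `u*` is the water-filling solution of the convex problem: `β t = 4ν exp (u* t / 2)`,
so every term of the proxy at `u*` equals `2ν` (equal marginal costs, `ν` being the multiplier of
the budget). The tangent-line bound `exp x ≥ 1 + x` at `u*` then gives, for any allocation `u`,
`∑ t, β t / 2 * exp (-u t / 2) ≥ 2Tν + ν (∑ t, u* t - ∑ t, u t)`, and the choice of `ν` makes
`log (4ν)` the mean of the `log (β t)` minus `C' / (2T)`, which is exactly `∑ t, u* t = C'`.
-/

open Finset Real

theorem eq_mul_exp_two_mul_log_div_div_two {b c : ℝ} (hb : 0 < b) (hc : 0 < c) :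
    b = c * exp (2 * log (b / c) / 2) := by
  rw [mul_div_cancel_left₀ _ two_ne_zero, exp_log (div_pos hb hc), mul_div_cancel₀ _ hc.ne']

theorem half_mul_exp_neg_half_eq {b c v : ℝ} (hb : b = c * exp (v / 2)) (u : ℝ) :
    b / 2 * exp (-u / 2) = c / 2 * exp ((v - u) / 2) := by
  rw [hb, sub_div, sub_eq_add_neg, exp_add, neg_div]
  ring

theorem sum_mul_exp_neg_half_le_of_eq_mul_exp {ι : Type*} [Fintype ι] {β v u : ι → ℝ} {c : ℝ}
    (hc : 0 ≤ c) (hβ : ∀ t, β t = c * exp (v t / 2)) (hu : ∑ t, u t ≤ ∑ t, v t) :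
    ∑ t, β t / 2 * exp (-v t / 2) ≤ ∑ t, β t / 2 * exp (-u t / 2) := by
  have tangent : ∀ t, c / 2 + c / 4 * (v t - u t) ≤ β t / 2 * exp (-u t / 2) := fun t =>
    calc c / 2 + c / 4 * (v t - u t) = c / 2 * ((v t - u t) / 2 + 1) := by ring
      _ ≤ c / 2 * exp ((v t - u t) / 2) := by gcongr; exact add_one_le_exp _
      _ = β t / 2 * exp (-u t / 2) := (half_mul_exp_neg_half_eq (hβ t) (u t)).symm
  calc ∑ t, β t / 2 * exp (-v t / 2) = ∑ _t : ι, c / 2 := by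
        refine sum_congr rfl fun t _ => ?_
        rw [half_mul_exp_neg_half_eq (hβ t), sub_self, zero_div, exp_zero, mul_one]
    _ ≤ ∑ t, (c / 2 + c / 4 * (v t - u t)) := by
        rw [sum_add_distrib, ← mul_sum, sum_sub_distrib]
        have : 0 ≤ c / 4 * (∑ t, v t - ∑ t, u t) := by
          have := sub_nonneg.2 hu
          positivity
        linarith
    _ ≤ ∑ t, β t / 2 * exp (-u t / 2) := sum_le_sum fun t _ => tangent t

theorem sum_log_div {ι : Type*} [Fintype ι] {β : ι → ℝ} (hβ : ∀ t, 0 < β t) {c : ℝ}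
    (hc : 0 < c) : ∑ t, log (β t / c) = log (∏ t, β t) - Fintype.card ι * log c := by
  simp_rw [log_div (hβ _).ne' hc.ne', sum_sub_distrib, sum_const, card_univ, nsmul_eq_mul,
    log_prod fun t _ => (hβ t).ne']

theorem mul_log_rpow_one_div_mul_exp {P n : ℝ} (hP : 0 < P) (hn : n ≠ 0) (x : ℝ) :
    n * log (P ^ (1 / n) * exp x) = log P + n * x := by
  rw [log_mul (rpow_pos_of_pos hP _).ne' (exp_ne_zero x), log_exp, log_rpow hP]
  field_simp

theorem optimized_proxy_geometric_mean_general {T : ℕ} (hT : 1 ≤ T)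
    (β : Fin T → ℝ) (hβ : ∀ t, 0 < β t)
    (C' : ℝ) (G ν : ℝ)
    (hG : G = (∏ t, β t) ^ ((1 : ℝ) / (T : ℝ)))
    (hν : ν = G / 4 * Real.exp (-C' / (2 * (T : ℝ))))
    (hβν : ∀ t, 4 * ν ≤ β t)
    (ustar : Fin T → ℝ)
    (hustar : ∀ t, ustar t = 2 * Real.log (β t / (4 * ν))) :
    (∀ t, 0 ≤ ustar t) ∧
    (∑ t, ustar t = C') ∧
    (∀ u : Fin T → ℝ, (∀ t, 0 ≤ u t) → (∑ t, u t ≤ C') →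
      ∑ t, β t / 2 * Real.exp (-(ustar t) / 2)
        ≤ ∑ t, β t / 2 * Real.exp (-(u t) / 2)) ∧
    (∑ t, β t / 2 * Real.exp (-(ustar t) / 2) = 2 * (T : ℝ) * ν) ∧
    (2 * (T : ℝ) * ν
        = (T : ℝ) / 2 * Real.exp (-C' / (2 * (T : ℝ)))
            * (∏ t, β t) ^ ((1 : ℝ) / (T : ℝ))) := by
  have hprod : 0 < ∏ t, β t := prod_pos fun t _ => hβ t
  have hν_pos : 0 < ν := by rw [hν, hG]; positivity
  have hβ_eq : ∀ t, β t = 4 * ν * exp (ustar t / 2) := fun t => by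
    rw [hustar t]; exact eq_mul_exp_two_mul_log_div_div_two (hβ t) (by positivity)
  have hsum : ∑ t, ustar t = C' := by
    have hT₀ : (T : ℝ) ≠ 0 := Nat.cast_ne_zero.2 (Nat.one_le_iff_ne_zero.1 hT)
    have h4ν : 4 * ν = (∏ t, β t) ^ (1 / (T : ℝ)) * exp (-C' / (2 * T)) := by rw [hν, hG]; ring
    simp_rw [hustar, ← mul_sum, sum_log_div hβ (by positivity : 0 < 4 * ν), Fintype.card_fin,
      h4ν, mul_log_rpow_one_div_mul_exp hprod hT₀]
    field_simp
    ring
  refine ⟨fun t => ?_, hsum, fun u _ hu => ?_, ?_, by rw [hν, hG]; ring⟩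
  · rw [hustar t]
    exact mul_nonneg zero_le_two (log_nonneg ((one_le_div (by positivity)).2 (hβν t)))
  · exact sum_mul_exp_neg_half_le_of_eq_mul_exp (by positivity) hβ_eq (hsum ▸ hu)
  · simp_rw [half_mul_exp_neg_half_eq (hβ_eq _), sub_self, zero_div, exp_zero, sum_const,
      card_univ, Fintype.card_fin, nsmul_eq_mul]
    ring

/-- Corollary 3 (optimized Chernoff-bound proxy with geometric mean): with
positive importance metrics `β t`, SNR budget `C' > 0`, geometric mean
`G = (∏ t, β t)^{1/T}`, dual variable `ν = (G/4) exp(-C'/(2T))`, and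
(assuming `β t ≥ 4ν` for all `t`) allocations `u* t = 2 log(β t/(4ν))`, the
point `u*` is feasible with tight budget and minimizes
`u ↦ ∑ t, (β t/2) exp(-u t/2)` over the feasible set, with minimum value
`2Tν = (T/2) exp(-C'/(2T)) (∏ t, β t)^{1/T}`. -/
theorem optimized_proxy_geometric_mean {T : ℕ} (hT : 1 ≤ T)
    (β : Fin T → ℝ) (hβ : ∀ t, 0 < β t)
    (C' : ℝ) (hC : 0 < C') (G ν : ℝ)
    (hG : G = (∏ t, β t) ^ ((1 : ℝ) / (T : ℝ)))
    (hν : ν = G / 4 * Real.exp (-C' / (2 * (T : ℝ))))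
    (hβν : ∀ t, 4 * ν ≤ β t)
    (ustar : Fin T → ℝ)
    (hustar : ∀ t, ustar t = 2 * Real.log (β t / (4 * ν))) :
    (∀ t, 0 ≤ ustar t) ∧
    (∑ t, ustar t = C') ∧
    (∀ u : Fin T → ℝ, (∀ t, 0 ≤ u t) → (∑ t, u t ≤ C') →
      ∑ t, β t / 2 * Real.exp (-(ustar t) / 2)
        ≤ ∑ t, β t / 2 * Real.exp (-(u t) / 2)) ∧
    (∑ t, β t / 2 * Real.exp (-(ustar t) / 2) = 2 * (T : ℝ) * ν) ∧
    (2 * (T : ℝ) * ν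
        = (T : ℝ) / 2 * Real.exp (-C' / (2 * (T : ℝ)))
            * (∏ t, β t) ^ ((1 : ℝ) / (T : ℝ))) :=
  optimized_proxy_geometric_mean_general hT β hβ C' G ν hG hν hβν ustar hustar
end
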